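/- Let C be a nontrivial commutative unital ring and G a semigroup with zero. Then there exist a unital C-algebra R and a minimal C-linear trace t : \overline{CG} → R which is normalized (i.e., t(π(1·g)) ∈ {0,1} for every g ∈ G) if and only if G has at most one ~-equivalence class other than the class of 0. -/

import Mathlib

/-- The one-step relation: `x = a*b` and `y = b*a`. -/
def simStep {G : Type*} [Mul G] (x y : G) : Prop := ∃ a b : G, x = a * b ∧ y = b * a

/-- The relation `~` on a semigroup: the reflexive-transitive closure of `simStep`. -/
def sim {G : Type*} [Mul G] : G → G → Prop := Relation.ReflTransGen simStep

theorem sim_equiv {G : Type*} [Mul G] : Equivalence (sim (G := G)) :=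
  ⟨fun _ => Relation.ReflTransGen.refl,
   fun h => (@Relation.ReflTransGen.stdSymm _ _
      ⟨fun _ _ ⟨a, b, h1, h2⟩ => ⟨b, a, h2, h1⟩⟩).symm _ _ h,
   fun h1 h2 => Relation.ReflTransGen.trans h1 h2⟩

/-- The setoid on `G` given by `~`. -/
def simSetoid (G : Type*) [Mul G] : Setoid G := ⟨sim, sim_equiv⟩

/-- The additive subgroup `[A,A]` generated by commutators. -/
def commutatorSubgroup (A : Type*) [NonUnitalNonAssocRing A] : AddSubgroup A :=
  AddSubgroup.closure {x | ∃ a b : A, x = a * b - b * a}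

/-- The ideal `I₀` of the semigroup ring `CG` consisting of functions supported in `{0}`. -/
noncomputable def I0 (C G : Type*) [CommRing C] [SemigroupWithZero G] :
    TwoSidedIdeal (MonoidAlgebra C G) :=
  TwoSidedIdeal.mk' {f : MonoidAlgebra C G | ∀ g : G, g ≠ 0 → f.coeff g = 0}
    (fun _ _ => rfl)
    (fun {x y} hx hy g hg => by
      show (x + y).coeff g = 0
      rw [MonoidAlgebra.coeff_add, Finsupp.add_apply, hx g hg, hy g hg, add_zero])
    (fun {x} hx g hg => by
      show (-x).coeff g = 0
      rw [MonoidAlgebra.coeff_neg, Finsupp.neg_apply, hx g hg, neg_zero])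
    (fun {x y} hy g hg => by
      classical
      rw [MonoidAlgebra.coeff_mul]
      rw [Finsupp.sum]
      refine Finset.sum_eq_zero fun a _ => ?_
      rw [Finsupp.sum]
      refine Finset.sum_eq_zero fun b hb => ?_
      have hb0 : b = 0 := by
        by_contra h
        exact Finsupp.mem_support_iff.mp hb (hy b h)
      subst hb0
      rw [mul_zero, if_neg fun h => hg h.symm])
    (fun {x y} hx g hg => by
      classical
      rw [MonoidAlgebra.coeff_mul]
      rw [Finsupp.sum]
      refine Finset.sum_eq_zero fun a ha => ?_
      rw [Finsupp.sum]
      refine Finset.sum_eq_zero fun b _ => ?_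
      have ha0 : a = 0 := by
        by_contra h
        exact Finsupp.mem_support_iff.mp ha (hx a h)
      subst ha0
      rw [zero_mul, if_neg fun h => hg h.symm])

/-- The contracted semigroup ring `\overline{CG} = CG / I₀`. -/
abbrev ContractedSemigroupRing (C G : Type*) [CommRing C] [SemigroupWithZero G] :=
  (I0 C G).ringCon.Quotient

/-- The quotient map `π : CG → \overline{CG}`. -/
noncomputable def toCSR (C G : Type*) [CommRing C] [SemigroupWithZero G]
    (f : MonoidAlgebra C G) : ContractedSemigroupRing C G := f

/-- The map `f ↦ ∑_g f(g) • δ(g)` from `CG` to `R`. -/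
def elemSum (C : Type*) {G R : Type*} [CommRing C] [SemigroupWithZero G]
    [AddCommMonoid R] [Module C R] (δ : G → R) (f : MonoidAlgebra C G) : R :=
  f.coeff.sum fun g c => c • δ g

universe u v

/-- A witness for a normalized minimal `C`-linear trace on `\overline{CG}` with values in
some unital `C`-algebra `R`. -/
structure NormalizedMinimalTraceWitness (C : Type u) (G : Type v)
    [CommRing C] [SemigroupWithZero G] : Type (max u v + 1) where
  R : Type (max u v)
  [instRing : Ring R]
  [instAlgebra : Algebra C R]
  t : ContractedSemigroupRing C G → R
  map_add : ∀ x y : ContractedSemigroupRing C G, t (x + y) = t x + t y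
  map_comm : ∀ x y : ContractedSemigroupRing C G, t (x * y) = t (y * x)
  map_smul : ∀ (c : C) (f : MonoidAlgebra C G),
    t (toCSR C G (c • f)) = c • t (toCSR C G f)
  minimal : ∀ x : ContractedSemigroupRing C G, t x = 0 →
    x ∈ commutatorSubgroup (ContractedSemigroupRing C G)
  normalized : ∀ g : G, t (toCSR C G (MonoidAlgebra.single g 1)) = 0 ∨
    t (toCSR C G (MonoidAlgebra.single g 1)) = 1


/-! If `S ⊆ G` is a union of `~`-classes not containing `0`, summing the coefficients over `S`
is a `C`-linear trace on `\overline{CG}`, so it vanishes on `[\overline{CG}, \overline{CG}]`.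
Taking `S` to be the class of `g` shows that `π(g) - π(h)` is not a sum of commutators unless
`g ~ h`; as `π(0) = 0`, in particular `π(g)` is not one when `g ≁ 0`. So a normalized minimal
trace `t` has `t(π(g)) = 1` for all `g ≁ 0`, and `t(π(g) - π(h)) = 0` then forces `g ~ h`.

Conversely, `π(ab) - π(ba)` is a commutator, so modulo commutators every `f` is congruent to
`(∑_{g ≁ 0} f(g)) • π(g₀)`, where `g₀` lies in the class other than that of `0` (or `g₀ = 0` if
there is none). Hence the sum of the coefficients outside the class of `0` is a minimal
normalized trace. -/

open MonoidAlgebra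

section CoeffSum

variable {C G : Type*} [CommSemiring C]

noncomputable def coeffSumOn [Mul G] (S : Set G) : MonoidAlgebra C G →ₗ[C] C :=
  Finsupp.linearCombination C (S.indicator 1) ∘ₗ (coeffLinearEquiv C).toLinearMap

theorem coeffSumOn_apply [Mul G] (S : Set G) (f : MonoidAlgebra C G) :
    coeffSumOn S f = f.coeff.sum fun g c ↦ c * S.indicator 1 g := by
  simp [coeffSumOn, Finsupp.linearCombination_apply]

theorem coeffSumOn_single [Mul G] (S : Set G) (g : G) (c : C) :
    coeffSumOn S (single g c) = S.indicator (fun _ ↦ c) g := by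
  by_cases hg : g ∈ S <;> simp [coeffSumOn, hg]

theorem coeffSumOn_mul_comm [Mul G] {S : Set G} (hS : ∀ a b, a * b ∈ S → b * a ∈ S)
    (x y : MonoidAlgebra C G) : coeffSumOn S (x * y) = coeffSumOn S (y * x) := by
  induction x using induction_linear with
  | zero => simp
  | add x x' hx hx' => simp only [add_mul, mul_add, map_add, hx, hx']
  | single a c =>
    induction y using induction_linear with
    | zero => simp
    | add y y' hy hy' => simp only [add_mul, mul_add, map_add, hy, hy']
    | single b d =>
      rw [single_mul_single, single_mul_single, coeffSumOn_single, coeffSumOn_single, mul_comm c]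
      by_cases hab : a * b ∈ S
      · rw [Set.indicator_of_mem hab, Set.indicator_of_mem (hS a b hab)]
      · rw [Set.indicator_of_notMem hab, Set.indicator_of_notMem (mt (hS b a) hab)]

end CoeffSum

theorem commutatorSubgroup_le_ker {A M : Type*} [NonUnitalNonAssocRing A] [AddCommGroup M]
    (φ : A →+ M) (hφ : ∀ a b, φ (a * b) = φ (b * a)) : commutatorSubgroup A ≤ φ.ker := by
  refine (AddSubgroup.closure_le _).mpr ?_
  rintro _ ⟨a, b, rfl⟩
  rw [SetLike.mem_coe, AddMonoidHom.mem_ker, map_sub, hφ, sub_self]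

section SimClasses

variable {G : Type*} [Mul G] [Zero G]

def nonzeroSimClasses (G : Type*) [Mul G] [Zero G] : Set G := {k | ¬ sim k 0}

theorem zero_notMem_nonzeroSimClasses : (0 : G) ∉ nonzeroSimClasses G :=
  fun h ↦ h (sim_equiv.refl 0)

theorem mul_comm_mem_nonzeroSimClasses {a b : G} (h : a * b ∈ nonzeroSimClasses G) :
    b * a ∈ nonzeroSimClasses G :=
  fun hba ↦ h (sim_equiv.trans (.single ⟨a, b, rfl, rfl⟩) hba)

theorem exists_forall_not_sim_zero_sim (hG : ∀ g h : G, ¬ sim g 0 → ¬ sim h 0 → sim g h) :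
    ∃ g₀ : G, ∀ k, ¬ sim k 0 → sim k g₀ := by
  by_cases h : ∃ g₀ : G, ¬ sim g₀ 0
  · obtain ⟨g₀, hg₀⟩ := h
    exact ⟨g₀, fun k hk ↦ hG k g₀ hk hg₀⟩
  · exact ⟨0, fun k hk ↦ (h ⟨k, hk⟩).elim⟩

end SimClasses

section Contracted

variable {C G : Type*} [CommRing C] [SemigroupWithZero G]

theorem mem_I0_iff {f : MonoidAlgebra C G} :
    f ∈ I0 C G ↔ ∀ g : G, g ≠ 0 → f.coeff g = 0 :=
  TwoSidedIdeal.mem_mk' ..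

theorem toCSR_surjective : Function.Surjective (toCSR C G) :=
  Quotient.mk''_surjective

theorem toCSR_mul (f g : MonoidAlgebra C G) :
    toCSR C G (f * g) = toCSR C G f * toCSR C G g := rfl

theorem toCSR_add (f g : MonoidAlgebra C G) :
    toCSR C G (f + g) = toCSR C G f + toCSR C G g := rfl

theorem toCSR_sub (f g : MonoidAlgebra C G) :
    toCSR C G (f - g) = toCSR C G f - toCSR C G g := rfl

theorem toCSR_zero : toCSR C G 0 = 0 := rfl

theorem toCSR_single_zero (c : C) : toCSR C G (single 0 c) = 0 := by
  refine (RingCon.eq _).mpr <| ((I0 C G).rel_iff _ _).mpr ?_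
  rw [sub_zero, mem_I0_iff]
  exact fun g hg ↦ Finsupp.single_eq_of_ne' (Ne.symm hg)

theorem coeffSumOn_eq_zero_of_mem_I0 {S : Set G} (h0 : (0 : G) ∉ S) {f : MonoidAlgebra C G}
    (hf : f ∈ I0 C G) : coeffSumOn S f = 0 := by
  refine (coeffSumOn_apply S f).trans <| Finset.sum_eq_zero fun g _ ↦ ?_
  by_cases hg : g ∈ S
  · dsimp only
    rw [mem_I0_iff.mp hf g (ne_of_mem_of_not_mem hg h0), zero_mul]
  · dsimp only
    rw [Set.indicator_of_notMem hg, mul_zero]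

noncomputable def csrCoeffSumOn (S : Set G) (h0 : (0 : G) ∉ S) :
    ContractedSemigroupRing C G →+ C :=
  (I0 C G).ringCon.toAddCon.lift (coeffSumOn S).toAddMonoidHom fun a b hab ↦ by
    have hab : a - b ∈ I0 C G := ((I0 C G).rel_iff a b).mp hab
    exact sub_eq_zero.mp <| (map_sub (coeffSumOn S) a b).symm.trans
      (coeffSumOn_eq_zero_of_mem_I0 h0 hab)

theorem csrCoeffSumOn_toCSR {S : Set G} (h0 : (0 : G) ∉ S) (f : MonoidAlgebra C G) :
    csrCoeffSumOn S h0 (toCSR C G f) = coeffSumOn S f := rfl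

theorem csrCoeffSumOn_mul_comm {S : Set G} (h0 : (0 : G) ∉ S)
    (hS : ∀ a b, a * b ∈ S → b * a ∈ S) (x y : ContractedSemigroupRing C G) :
    csrCoeffSumOn S h0 (x * y) = csrCoeffSumOn S h0 (y * x) := by
  obtain ⟨f, rfl⟩ := toCSR_surjective x
  obtain ⟨g, rfl⟩ := toCSR_surjective y
  rw [← toCSR_mul, ← toCSR_mul, csrCoeffSumOn_toCSR, csrCoeffSumOn_toCSR,
    coeffSumOn_mul_comm hS]

theorem csrCoeffSumOn_eq_zero_of_mem_commutatorSubgroup {S : Set G} (h0 : (0 : G) ∉ S)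
    (hS : ∀ a b, a * b ∈ S → b * a ∈ S) {x : ContractedSemigroupRing C G}
    (hx : x ∈ commutatorSubgroup (ContractedSemigroupRing C G)) : csrCoeffSumOn S h0 x = 0 :=
  commutatorSubgroup_le_ker _ (csrCoeffSumOn_mul_comm h0 hS) hx

theorem toCSR_single_sub_single_mem_commutatorSubgroup (c : C) {k l : G} (h : sim k l) :
    toCSR C G (single k c) - toCSR C G (single l c) ∈
      commutatorSubgroup (ContractedSemigroupRing C G) := by
  induction h with
  | refl => rw [sub_self]; exact zero_mem _
  | tail _ step ih =>
    obtain ⟨a, b, rfl, rfl⟩ := step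
    have hab : toCSR C G (single (a * b) c) - toCSR C G (single (b * a) c) ∈
        commutatorSubgroup (ContractedSemigroupRing C G) := by
      rw [show single (a * b) c = single a c * single b 1 by rw [single_mul_single, mul_one],
        show single (b * a) c = single b 1 * single a c by rw [single_mul_single, one_mul],
        toCSR_mul, toCSR_mul]
      exact AddSubgroup.subset_closure ⟨_, _, rfl⟩
    simpa only [sub_add_sub_cancel] using add_mem ih hab

theorem toCSR_single_mem_commutatorSubgroup_of_sim_zero (c : C) {k : G} (h : sim k 0) :
    toCSR C G (single k c) ∈ commutatorSubgroup (ContractedSemigroupRing C G) := by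
  simpa only [toCSR_single_zero, sub_zero] using
    toCSR_single_sub_single_mem_commutatorSubgroup c h

theorem toCSR_single_sub_single_notMem_commutatorSubgroup [Nontrivial C] {g h : G}
    (hg : ¬ sim g 0) (hhg : ¬ sim h g) :
    toCSR C G (single g 1) - toCSR C G (single h 1) ∉
      commutatorSubgroup (ContractedSemigroupRing C G) := by
  set S := {k : G | sim k g}
  have h0 : (0 : G) ∉ S := fun h0 ↦ hg (sim_equiv.symm h0)
  have hS : ∀ a b, a * b ∈ S → b * a ∈ S := fun a b hab ↦
    sim_equiv.trans (.single ⟨b, a, rfl, rfl⟩) hab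
  intro hmem
  have := csrCoeffSumOn_eq_zero_of_mem_commutatorSubgroup h0 hS hmem
  rw [← toCSR_sub, csrCoeffSumOn_toCSR, map_sub, coeffSumOn_single, coeffSumOn_single,
    Set.indicator_of_mem (show g ∈ S from sim_equiv.refl g),
    Set.indicator_of_notMem (show h ∉ S from hhg), sub_zero] at this
  exact one_ne_zero this

theorem toCSR_sub_single_coeffSumOn_mem_commutatorSubgroup {g₀ : G}
    (hg₀ : ∀ k, ¬ sim k 0 → sim k g₀) (f : MonoidAlgebra C G) :
    toCSR C G f - toCSR C G (single g₀ (coeffSumOn (nonzeroSimClasses G) f)) ∈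
      commutatorSubgroup (ContractedSemigroupRing C G) := by
  induction f using induction_linear with
  | zero => rw [map_zero, single_zero, sub_self]; exact zero_mem _
  | add f f' hf hf' =>
    rw [map_add, single_add, toCSR_add, toCSR_add, add_sub_add_comm]
    exact add_mem hf hf'
  | single k c =>
    rw [coeffSumOn_single]
    by_cases hk : k ∈ nonzeroSimClasses G
    · rw [Set.indicator_of_mem hk]
      exact toCSR_single_sub_single_mem_commutatorSubgroup c (hg₀ k hk)
    · rw [Set.indicator_of_notMem hk, single_zero, toCSR_zero, sub_zero]
      exact toCSR_single_mem_commutatorSubgroup_of_sim_zero c (not_not.mp hk)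

theorem toCSR_mem_commutatorSubgroup_of_coeffSumOn_eq_zero
    (hG : ∀ g h : G, ¬ sim g 0 → ¬ sim h 0 → sim g h) {f : MonoidAlgebra C G}
    (hf : coeffSumOn (nonzeroSimClasses G) f = 0) :
    toCSR C G f ∈ commutatorSubgroup (ContractedSemigroupRing C G) := by
  obtain ⟨g₀, hg₀⟩ := exists_forall_not_sim_zero_sim hG
  simpa only [hf, single_zero, toCSR_zero, sub_zero] using
    toCSR_sub_single_coeffSumOn_mem_commutatorSubgroup hg₀ f

end Contracted

namespace NormalizedMinimalTraceWitness

attribute [local instance] instRing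

variable {C : Type u} {G : Type v} [CommRing C] [SemigroupWithZero G]

theorem map_sub (W : NormalizedMinimalTraceWitness C G) (x y : ContractedSemigroupRing C G) :
    W.t (x - y) = W.t x - W.t y :=
  _root_.map_sub (AddMonoidHom.mk' W.t W.map_add) x y

theorem t_toCSR_single_one [Nontrivial C] (W : NormalizedMinimalTraceWitness C G) {k : G}
    (hk : ¬ sim k 0) : W.t (toCSR C G (single k 1)) = 1 := by
  refine (W.normalized k).resolve_left fun h0 ↦ ?_
  have hmem := W.minimal _ h0
  rw [← sub_zero (toCSR C G _), ← toCSR_single_zero (1 : C)] at hmem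
  exact toCSR_single_sub_single_notMem_commutatorSubgroup hk (fun h ↦ hk (sim_equiv.symm h)) hmem

theorem sim_of_not_sim_zero [Nontrivial C] (W : NormalizedMinimalTraceWitness C G) {g h : G}
    (hg : ¬ sim g 0) (hh : ¬ sim h 0) : sim g h := by
  have ht : W.t (toCSR C G (single g 1) - toCSR C G (single h 1)) = 0 := by
    rw [W.map_sub, W.t_toCSR_single_one hg, W.t_toCSR_single_one hh, sub_self]
  by_contra hgh
  exact toCSR_single_sub_single_notMem_commutatorSubgroup hg (fun h ↦ hgh (sim_equiv.symm h))
    (W.minimal _ ht)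

end NormalizedMinimalTraceWitness

theorem nonempty_normalizedMinimalTraceWitness {C : Type u} {G : Type v} [CommRing C]
    [SemigroupWithZero G] (hG : ∀ g h : G, ¬ sim g 0 → ¬ sim h 0 → sim g h) :
    Nonempty (NormalizedMinimalTraceWitness C G) :=
  let φ := csrCoeffSumOn (C := C) (nonzeroSimClasses G) zero_notMem_nonzeroSimClasses
  ⟨{ R := ULift.{v} C
     t x := ULift.up (φ x)
     map_add x y := congrArg ULift.up (map_add φ x y)
     map_comm x y := congrArg ULift.up
      (csrCoeffSumOn_mul_comm _ (fun _ _ ↦ mul_comm_mem_nonzeroSimClasses) x y)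
     map_smul c f := congrArg ULift.up (map_smul (coeffSumOn _) c f)
     minimal x hx := by
       obtain ⟨f, rfl⟩ := toCSR_surjective x
       exact toCSR_mem_commutatorSubgroup_of_coeffSumOn_eq_zero hG (congrArg ULift.down hx)
     normalized g := by
       have hφ : φ (toCSR C G (single g 1)) = (nonzeroSimClasses G).indicator 1 g :=
         coeffSumOn_single _ g 1
       by_cases hg : g ∈ nonzeroSimClasses G
       · exact .inr (congrArg ULift.up (hφ.trans (Set.indicator_of_mem hg _)))
       · exact .inl (congrArg ULift.up (hφ.trans (Set.indicator_of_notMem hg _))) }⟩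

/-- There exist a unital `C`-algebra `R` and a normalized minimal
`C`-linear trace `t : \overline{CG} → R` if and only if `G` has at most one
`~`-equivalence class other than the class of `0`. -/
theorem semigroupRing_normalized_minimal_trace_iff
    (C : Type u) (G : Type v) [CommRing C] [Nontrivial C] [SemigroupWithZero G] :
    Nonempty (NormalizedMinimalTraceWitness C G) ↔
      ∀ g h : G, ¬ sim g 0 → ¬ sim h 0 → sim g h :=
  ⟨fun ⟨W⟩ _ _ ↦ W.sim_of_not_sim_zero, nonempty_normalizedMinimalTraceWitness⟩
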